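/- Let T=(V,E) be a forest with n vertices and let i ≥ 2 be an integer. If ≪ is a linear order on V chosen uniformly at random, then the probability that the orientation T^≪ contains at least one bidirected path with exactly 2i−2 vertices is at most (n²/2) · 2^{2i−3}/(2i−2)!. -/

import Mathlib

noncomputable def ffAux {V : Type*} (G : SimpleGraph V) (ord : V → ℕ) (t : ℕ) (v : V) : ℕ :=
  sInf {i : ℕ | 0 < i ∧ ∀ u, G.Adj u v → ∀ h : ord u < t, ffAux G ord (ord u) u ≠ i}
termination_by t
decreasing_by exact h

/-- The color that First-Fit assigns to vertex `v` when coloring `G` in the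
presentation order in which `u` comes before `w` iff `ord u < ord w`. -/
noncomputable def ffColor {V : Type*} (G : SimpleGraph V) (ord : V → ℕ) (v : V) : ℕ :=
  ffAux G ord (ord v) v

/-- The number of colors used by First-Fit on `G` in the order given by `ord`. -/
noncomputable def ffNumColors {V : Type*} [Fintype V] (G : SimpleGraph V) (ord : V → ℕ) : ℕ :=
  (Finset.univ.image (ffColor G ord)).card

/-- Expected number of colors used by First-Fit on `G` in a uniformly random order. -/
noncomputable def ffExpect {V : Type*} [Fintype V] (G : SimpleGraph V) : ℝ :=
  letI := Classical.decEq V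
  (∑ e : V ≃ Fin (Fintype.card V), (ffNumColors G (fun v => (e v : ℕ)) : ℝ)) /
    (Nat.factorial (Fintype.card V) : ℝ)

/-- Expected value of χ_FF(G,≪)/χ(G) over a uniformly random order ≪. -/
noncomputable def ffRatioExpect {V : Type*} [Fintype V] (G : SimpleGraph V) : ℝ :=
  letI := Classical.decEq V
  (∑ e : V ≃ Fin (Fintype.card V),
      (ffNumColors G (fun v => (e v : ℕ)) : ℝ) / (G.chromaticNumber.toNat : ℝ)) /
    (Nat.factorial (Fintype.card V) : ℝ)

/-- Probability, over a uniformly random presentation order of the vertex set `V`,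
of the event `P` (a property of the position function of the order). -/
noncomputable def ffProb {V : Type*} [Fintype V] (P : (V → ℕ) → Prop) : ℝ :=
  letI := Classical.decEq V
  letI := Classical.decPred (fun e : V ≃ Fin (Fintype.card V) => P (fun v => (e v : ℕ)))
  ((Finset.univ.filter (fun e : V ≃ Fin (Fintype.card V) => P (fun v => (e v : ℕ)))).card : ℝ) /
    (Nat.factorial (Fintype.card V) : ℝ)

/-- `RFF n`: the maximum over all forests on `n` vertices of the expected value of
χ_FF(T,≪)/χ(T) over a uniformly random order ≪. -/
noncomputable def RFF (n : ℕ) : ℝ :=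
  sSup {x : ℝ | ∃ G : SimpleGraph (Fin n), G.IsAcyclic ∧ x = ffRatioExpect G}

/-- `l` is a bidirected (simple) path in the orientation of `G` induced by `ord`. -/
def IsBidirected {V : Type*} (G : SimpleGraph V) (ord : V → ℕ) (l : List V) : Prop :=
  l.Nodup ∧ ∃ (l₁ l₂ : List V) (m : V), l = l₁ ++ m :: l₂ ∧
    List.Chain' (fun a b => G.Adj a b ∧ ord a < ord b) (l₁ ++ [m]) ∧
    List.Chain' (fun a b => G.Adj a b ∧ ord b < ord a) (m :: l₂)

/-- Vertices of the tree `T^r_i`: lists of pairs `(j,q)` with strictly decreasing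
positive first coordinates, starting below `i`. -/
def TVert (r i : ℕ) : Type :=
  {l : List (Fin i × Fin r) //
    List.Chain (fun a b => b < a) i (l.map fun p => (p.1 : ℕ)) ∧ ∀ p ∈ l, 1 ≤ (p.1 : ℕ)}

/-- The root of `T^r_i`. -/
def TRoot (r i : ℕ) : TVert r i := ⟨[], List.Chain.nil, by simp⟩

/-- The tree `T^r_i`: a vertex is adjacent to each of its one-step extensions. -/
def TGraph (r i : ℕ) : SimpleGraph (TVert r i) :=
  SimpleGraph.fromRel (fun u v => ∃ x, v.val = u.val ++ [x])

instance (r i : ℕ) : Finite (TVert r i) := by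
  have hinj : Function.Injective
      (fun v : TVert r i => (⟨v.val, by
        have h := v.property.1
        haveI : IsTrans ℕ (fun a b => b < a) := ⟨fun a b c h1 h2 => lt_trans h2 h1⟩
        haveI : Trans (fun a b : ℕ => b < a) (fun a b : ℕ => b < a) (fun a b : ℕ => b < a) :=
          ⟨fun h1 h2 => lt_trans h2 h1⟩
        replace h := List.isChain_iff_pairwise.mp h
        have h2 := (List.pairwise_cons.mp h).2
        exact List.Nodup.of_map _ (h2.imp fun hab => (ne_of_lt hab).symm)⟩ :
        {l : List (Fin i × Fin r) // l.Nodup})) :=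
    fun a b hab => Subtype.ext (Subtype.mk_eq_mk.mp hab)
  exact Finite.of_injective _ hinj

noncomputable instance (r i : ℕ) : Fintype (TVert r i) := Fintype.ofFinite _


set_option linter.unusedSectionVars false
set_option maxHeartbeats 1000000


open Finset

def UniF {k : ℕ} (f : Fin k → ℕ) : Prop :=
  ∃ m : Fin k, (∀ a b : Fin k, a < b → b ≤ m → f a < f b) ∧
    (∀ a b : Fin k, m ≤ a → a < b → f b < f a)

section UniPerm

variable {k : ℕ}

lemma uniF_peak (hk : 0 < k) (τ : Equiv.Perm (Fin k))
    (h : UniF (fun j => ((τ j : Fin k) : ℕ))) :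
    (∀ a b : Fin k, a < b → b ≤ τ.symm ⟨k-1, by omega⟩ → τ a < τ b) ∧
    (∀ a b : Fin k, τ.symm ⟨k-1, by omega⟩ ≤ a → a < b → τ b < τ a) := by
  obtain ⟨m, h1, h2⟩ := h
  have h1' : ∀ a b : Fin k, a < b → b ≤ m → τ a < τ b := by
    intro a b hab hbm; exact_mod_cast h1 a b hab hbm
  have h2' : ∀ a b : Fin k, m ≤ a → a < b → τ b < τ a := by
    intro a b hma hab; exact_mod_cast h2 a b hma hab
  have hmax : ∀ j, τ j ≤ τ m := by
    intro j
    rcases lt_trichotomy j m with hj | hj | hj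
    · exact (h1' j m hj le_rfl).le
    · exact hj ▸ le_rfl
    · exact (h2' m j le_rfl hj).le
  have htop : τ m = ⟨k-1, by omega⟩ := by
    have ha : τ m ≤ ⟨k-1, by omega⟩ := by
      rw [Fin.le_def]
      have := (τ m).isLt
      simp only []
      omega
    have hb : (⟨k-1, by omega⟩ : Fin k) ≤ τ m := by
      have := hmax (τ.symm ⟨k-1, by omega⟩); simpa using this
    exact le_antisymm ha hb
  have hms : τ.symm ⟨k-1, by omega⟩ = m := by rw [← htop]; exact τ.symm_apply_apply m
  rw [hms]
  exact ⟨h1', h2'⟩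

noncomputable def ASet (hk : 0 < k) (τ : Equiv.Perm (Fin k)) : Finset (Fin k) :=
  Finset.univ.filter (fun r => τ.symm r < τ.symm ⟨k-1, by omega⟩)

lemma symm_eq_of_uniF (hk : 0 < k) (τ : Equiv.Perm (Fin k))
    (h : UniF (fun j => ((τ j : Fin k) : ℕ))) (r : Fin k) :
    (τ.symm r : ℕ) = if r ∈ ASet hk τ then ((ASet hk τ).filter (· < r)).card
      else k - 1 - ((Finset.univ \ ASet hk τ).filter (· < r)).card := by
  classical
  obtain ⟨h1, h2⟩ := uniF_peak hk τ h
  have key1 : ∀ x y : Fin k, x ≤ τ.symm ⟨k-1, by omega⟩ → y ≤ τ.symm ⟨k-1, by omega⟩ →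
      (τ x < τ y ↔ x < y) := by
    intro x y hx hy
    constructor
    · intro hxy
      by_contra hle
      push_neg at hle
      rcases eq_or_lt_of_le hle with he | hlt
      · rw [he] at hxy; exact lt_irrefl _ hxy
      · exact absurd hxy (not_lt.2 (h1 y x hlt hx).le)
    · intro hxy; exact h1 x y hxy hy
  have key2 : ∀ x y : Fin k, τ.symm ⟨k-1, by omega⟩ ≤ x → τ.symm ⟨k-1, by omega⟩ ≤ y →
      (τ x < τ y ↔ y < x) := by
    intro x y hx hy
    constructor
    · intro hxy
      by_contra hle
      push_neg at hle
      rcases eq_or_lt_of_le hle with he | hlt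
      · rw [he] at hxy; exact lt_irrefl _ hxy
      · exact absurd hxy (not_lt.2 (h2 x y hx hlt).le)
    · intro hxy; exact h2 y x hy hxy
  by_cases hr : r ∈ ASet hk τ
  · rw [if_pos hr]
    have hjm : τ.symm r < τ.symm ⟨k-1, by omega⟩ := by
      simpa [ASet] using hr
    have himg : (ASet hk τ).filter (· < r)
        = (Finset.univ.filter (fun j' : Fin k => j' < τ.symm r)).image τ := by
      ext r'
      simp only [ASet, Finset.mem_filter, Finset.mem_univ, true_and, Finset.mem_image]
      constructor
      · rintro ⟨hr'm, hr'r⟩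
        refine ⟨τ.symm r', ?_, τ.apply_symm_apply r'⟩
        have : τ (τ.symm r') < τ (τ.symm r) := by
          rw [τ.apply_symm_apply, τ.apply_symm_apply]; exact hr'r
        exact (key1 _ _ hr'm.le hjm.le).mp this
      · rintro ⟨j', hj', rfl⟩
        have hj'm : j' < τ.symm ⟨k-1, by omega⟩ := lt_trans hj' hjm
        refine ⟨by simpa using hj'm, ?_⟩
        have := (key1 j' (τ.symm r) hj'm.le hjm.le).mpr hj'
        rwa [τ.apply_symm_apply] at this
    rw [himg, Finset.card_image_of_injective _ τ.injective]
    have he : Finset.univ.filter (fun x : Fin k => x < τ.symm r) = Finset.Iio (τ.symm r) := by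
      ext x; simp
    rw [he, Fin.card_Iio]
  · rw [if_neg hr]
    have hjm : τ.symm ⟨k-1, by omega⟩ ≤ τ.symm r := by
      simpa [ASet, not_lt] using hr
    have himg : (Finset.univ \ ASet hk τ).filter (· < r)
        = (Finset.univ.filter (fun j' : Fin k => τ.symm r < j')).image τ := by
      ext r'
      simp only [ASet, Finset.mem_filter, Finset.mem_univ, true_and, Finset.mem_image,
        Finset.mem_sdiff, not_lt]
      constructor
      · rintro ⟨hr'm, hr'r⟩
        refine ⟨τ.symm r', ?_, τ.apply_symm_apply r'⟩
        have : τ (τ.symm r') < τ (τ.symm r) := by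
          rw [τ.apply_symm_apply, τ.apply_symm_apply]; exact hr'r
        exact (key2 _ _ hr'm hjm).mp this
      · rintro ⟨j', hj', rfl⟩
        have hj'm : τ.symm ⟨k-1, by omega⟩ ≤ j' := le_trans hjm hj'.le
        refine ⟨by simpa using hj'm, ?_⟩
        have := (key2 j' (τ.symm r) hj'm hjm).mpr hj'
        rwa [τ.apply_symm_apply] at this
    rw [himg, Finset.card_image_of_injective _ τ.injective]
    have he : Finset.univ.filter (fun x : Fin k => τ.symm r < x) = Finset.Ioi (τ.symm r) := by
      ext x; simp
    rw [he, Fin.card_Ioi]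
    have : (τ.symm r : ℕ) ≤ k - 1 := by
      have := (τ.symm r).isLt; omega
    omega

open Classical in
lemma uniPerm_card (hk : 0 < k) :
    (Finset.univ.filter (fun τ : Equiv.Perm (Fin k) =>
      UniF (fun j => ((τ j : Fin k) : ℕ)))).card ≤ 2 ^ (k - 1) := by
  classical
  have hcard : ((Finset.univ.erase (⟨k-1, by omega⟩ : Fin k)).powerset).card = 2 ^ (k - 1) := by
    rw [Finset.card_powerset, Finset.card_erase_of_mem (Finset.mem_univ _), Finset.card_univ,
      Fintype.card_fin]
  rw [← hcard]
  apply Finset.card_le_card_of_injOn (fun τ => ASet hk τ)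
  · intro τ hτ
    simp only [Finset.mem_coe, Finset.mem_powerset]
    intro r hr
    simp only [ASet, Finset.mem_filter, Finset.mem_univ, true_and] at hr
    refine Finset.mem_erase.2 ⟨?_, Finset.mem_univ _⟩
    intro he
    rw [he] at hr
    exact lt_irrefl _ hr
  · intro τ hτ σ hσ hAs
    simp only [Finset.coe_filter, Set.mem_setOf_eq, Finset.mem_univ, true_and] at hτ hσ
    have hsymm : ∀ r, τ.symm r = σ.symm r := by
      intro r
      have e1 := symm_eq_of_uniF hk τ hτ r
      have e2 := symm_eq_of_uniF hk σ hσ r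
      simp only [hAs] at e1
      exact Fin.ext (by rw [e1, e2])
    have h' : τ.symm = σ.symm := Equiv.ext hsymm
    calc τ = τ.symm.symm := by simp
    _ = σ.symm.symm := by rw [h']
    _ = σ := by simp

end UniPerm

open Finset

section Core

variable {V : Type*} [Fintype V] [DecidableEq V] {k : ℕ}

def sE (v : Fin k → V) (e : V ≃ Fin (Fintype.card V)) : Finset (Fin (Fintype.card V)) :=
  Finset.univ.image (fun j => e (v j))

lemma sE_card (v : Fin k → V) (hv : Function.Injective v) (e : V ≃ Fin (Fintype.card V)) :
    (sE v e).card = k := by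
  rw [sE]
  rw [Finset.card_image_of_injective _ (show Function.Injective (fun j => e (v j)) from
    fun a b h => hv (e.injective h)), Finset.card_univ, Fintype.card_fin]

noncomputable def bE (v : Fin k → V) (hv : Function.Injective v) (e : V ≃ Fin (Fintype.card V)) :
    Fin k ≃o {x // x ∈ sE v e} :=
  (sE v e).orderIsoOfFin (sE_card v hv e)

lemma mem_sE (v : Fin k → V) (e : V ≃ Fin (Fintype.card V)) (j : Fin k) :
    e (v j) ∈ sE v e := Finset.mem_image.2 ⟨j, Finset.mem_univ j, rfl⟩

noncomputable def PE (v : Fin k → V) (hv : Function.Injective v)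
    (e : V ≃ Fin (Fintype.card V)) (j : Fin k) : Fin k :=
  (bE v hv e).symm ⟨e (v j), mem_sE v e j⟩

lemma bE_PE (v : Fin k → V) (hv : Function.Injective v) (e : V ≃ Fin (Fintype.card V))
    (j : Fin k) : ((bE v hv e) (PE v hv e j) : Fin (Fintype.card V)) = e (v j) := by
  rw [PE, OrderIso.apply_symm_apply]

lemma PE_inj (v : Fin k → V) (hv : Function.Injective v) (e : V ≃ Fin (Fintype.card V)) :
    Function.Injective (PE v hv e) := by
  intro a b hab
  have := congrArg (fun x => ((bE v hv e) x : Fin (Fintype.card V))) hab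
  simp only [bE_PE] at this
  exact hv (e.injective this)

noncomputable def PEperm (v : Fin k → V) (hv : Function.Injective v)
    (e : V ≃ Fin (Fintype.card V)) : Equiv.Perm (Fin k) :=
  Equiv.ofBijective (PE v hv e) (Finite.injective_iff_bijective.mp (PE_inj v hv e))

lemma PEperm_apply (v : Fin k → V) (hv : Function.Injective v) (e : V ≃ Fin (Fintype.card V))
    (j : Fin k) : PEperm v hv e j = PE v hv e j := rfl

noncomputable def Phi (v : Fin k → V) (hv : Function.Injective v)
    (e : V ≃ Fin (Fintype.card V)) (σ : Equiv.Perm (Fin k)) : V ≃ Fin (Fintype.card V) :=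
  e.trans (Equiv.Perm.extendDomain ((PEperm v hv e).symm.trans σ) (bE v hv e).toEquiv)

lemma Phi_apply_v (v : Fin k → V) (hv : Function.Injective v)
    (e : V ≃ Fin (Fintype.card V)) (σ : Equiv.Perm (Fin k)) (j : Fin k) :
    Phi v hv e σ (v j) = ((bE v hv e) (σ j) : Fin (Fintype.card V)) := by
  have h1 : e (v j) = ((bE v hv e).toEquiv (PE v hv e j) : Fin (Fintype.card V)) :=
    (bE_PE v hv e j).symm
  show Equiv.Perm.extendDomain ((PEperm v hv e).symm.trans σ) (bE v hv e).toEquiv (e (v j))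
    = _
  rw [h1, Equiv.Perm.extendDomain_apply_image]
  have h2 : ((PEperm v hv e).symm.trans σ) (PE v hv e j) = σ j := by
    rw [Equiv.trans_apply, ← PEperm_apply, Equiv.symm_apply_apply]
  rw [h2]
  rfl

lemma Phi_apply_not_mem (v : Fin k → V) (hv : Function.Injective v)
    (e : V ≃ Fin (Fintype.card V)) (σ : Equiv.Perm (Fin k)) (w : V)
    (hw : w ∉ Set.range v) : Phi v hv e σ w = e w := by
  show Equiv.Perm.extendDomain _ _ (e w) = e w
  apply Equiv.Perm.extendDomain_apply_not_subtype
  intro hmem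
  obtain ⟨j, _, hj⟩ := Finset.mem_image.1 hmem
  exact hw ⟨j, e.injective hj⟩

lemma sE_Phi (v : Fin k → V) (hv : Function.Injective v)
    (e : V ≃ Fin (Fintype.card V)) (σ : Equiv.Perm (Fin k)) :
    sE v (Phi v hv e σ) = sE v e := by
  apply Finset.eq_of_subset_of_card_le
  · intro x hx
    obtain ⟨j, _, hj⟩ := Finset.mem_image.1 hx
    rw [Phi_apply_v v hv e σ j] at hj
    rw [← hj]
    exact ((bE v hv e) (σ j)).2
  · rw [sE_card v hv, sE_card v hv]

lemma bE_congr (s t : Finset (Fin (Fintype.card V))) (hs : s.card = k) (ht : t.card = k)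
    (hst : s = t) (x : Fin k) :
    ((s.orderIsoOfFin hs x : Fin (Fintype.card V))) = (t.orderIsoOfFin ht x : Fin (Fintype.card V)) := by
  subst hst; rfl

lemma bE_Phi_coe (v : Fin k → V) (hv : Function.Injective v)
    (e : V ≃ Fin (Fintype.card V)) (σ : Equiv.Perm (Fin k)) (x : Fin k) :
    ((bE v hv (Phi v hv e σ)) x : Fin (Fintype.card V)) = ((bE v hv e) x : Fin (Fintype.card V)) :=
  bE_congr _ _ _ _ (sE_Phi v hv e σ) x

lemma PE_Phi (v : Fin k → V) (hv : Function.Injective v)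
    (e : V ≃ Fin (Fintype.card V)) (σ : Equiv.Perm (Fin k)) (j : Fin k) :
    PE v hv (Phi v hv e σ) j = σ j := by
  have h1 : ((bE v hv (Phi v hv e σ)) (PE v hv (Phi v hv e σ) j) : Fin (Fintype.card V))
      = Phi v hv e σ (v j) := bE_PE v hv _ j
  rw [Phi_apply_v, ← bE_Phi_coe v hv e σ (σ j)] at h1
  have := Subtype.ext h1
  exact (bE v hv (Phi v hv e σ)).injective this

lemma uniF_of_iff {k : ℕ} {f g : Fin k → ℕ} (h : ∀ a b, f a < f b ↔ g a < g b) :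
    UniF f → UniF g := by
  rintro ⟨m, h1, h2⟩
  exact ⟨m, fun a b hab hbm => (h a b).mp (h1 a b hab hbm),
    fun a b hma hab => (h b a).mp (h2 a b hma hab)⟩

section Core2
variable {V : Type*} [Fintype V] [DecidableEq V] {k : ℕ}

open Classical in
lemma count_uni (v : Fin k → V) (hv : Function.Injective v) (hk : 0 < k) :
    (Finset.univ.filter (fun e : V ≃ Fin (Fintype.card V) =>
        UniF (fun j => ((e (v j) : Fin (Fintype.card V)) : ℕ)))).card * k.factorial
      ≤ (Fintype.card V).factorial * 2 ^ (k - 1) := by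
  classical
  have hcmp : ∀ (e : V ≃ Fin (Fintype.card V)) (a b : Fin k),
      ((e (v a) : Fin (Fintype.card V)) : ℕ) < ((e (v b) : Fin (Fintype.card V)) : ℕ) ↔
        ((PEperm v hv e a : Fin k) : ℕ) < ((PEperm v hv e b : Fin k) : ℕ) := by
    intro e a b
    have hmk : ∀ x : Fin k, (bE v hv e) (PE v hv e x) = ⟨e (v x), mem_sE v e x⟩ :=
      fun x => Subtype.ext (bE_PE v hv e x)
    have h1 : PE v hv e a < PE v hv e b ↔
        (bE v hv e) (PE v hv e a) < (bE v hv e) (PE v hv e b) :=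
      ((bE v hv e).lt_iff_lt).symm
    rw [hmk, hmk, Subtype.mk_lt_mk] at h1
    rw [PEperm_apply, PEperm_apply, ← Fin.lt_def, ← h1, Fin.lt_def]
  have key : ((Finset.univ.filter (fun e : V ≃ Fin (Fintype.card V) =>
        UniF (fun j => ((e (v j)) : ℕ)))) ×ˢ (Finset.univ : Finset (Equiv.Perm (Fin k)))).card ≤
      (((Finset.univ : Finset (V ≃ Fin (Fintype.card V)))) ×ˢ
        (Finset.univ.filter (fun τ : Equiv.Perm (Fin k) =>
          UniF (fun j => ((τ j : Fin k) : ℕ))))).card := by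
    apply Finset.card_le_card_of_injOn (fun p => (Phi v hv p.1 p.2, PEperm v hv p.1))
    · rintro ⟨e, σ⟩ hp
      simp only [Finset.mem_coe, Finset.mem_product, Finset.mem_filter, Finset.mem_univ, true_and,
        and_true] at hp ⊢
      exact uniF_of_iff (fun a b => hcmp e a b) hp
    · rintro ⟨e, σ⟩ hp ⟨e', σ'⟩ hp' heq
      simp only [Prod.mk.injEq] at heq
      obtain ⟨hΦ, hP⟩ := heq
      have hrec : ∀ (E : V ≃ Fin (Fintype.card V)) (σ₀ : Equiv.Perm (Fin k)),
          Phi v hv (Phi v hv E σ₀) (PEperm v hv E) = E := by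
        intro E σ₀
        apply Equiv.ext
        intro w
        by_cases hw : w ∈ Set.range v
        · obtain ⟨j, rfl⟩ := hw
          rw [Phi_apply_v, bE_Phi_coe, PEperm_apply, bE_PE]
        · rw [Phi_apply_not_mem _ _ _ _ _ hw, Phi_apply_not_mem _ _ _ _ _ hw]
      have he : e = e' := by
        have h1 := hrec e σ
        have h2 := hrec e' σ'
        rw [hΦ, hP] at h1
        exact h1.symm.trans h2
      subst he
      have hσ : σ = σ' := by
        apply Equiv.ext; intro j
        have hj := congrArg (fun E : V ≃ Fin (Fintype.card V) => E (v j)) hΦ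
        simp only [Phi_apply_v] at hj
        exact (bE v hv e).injective (Subtype.ext hj)
      rw [hσ]
  rw [Finset.card_product, Finset.card_product, Finset.card_univ, Finset.card_univ,
    Fintype.card_perm, Fintype.card_fin, Fintype.card_equiv (Fintype.equivFin V)] at key
  calc (Finset.univ.filter (fun e : V ≃ Fin (Fintype.card V) =>
        UniF (fun j => ((e (v j)) : ℕ)))).card * k.factorial ≤ _ := key
  _ ≤ (Fintype.card V).factorial * 2 ^ (k - 1) :=
      Nat.mul_le_mul_left _ (uniPerm_card hk)

end Core2

section Walks
variable {V : Type*} {G : SimpleGraph V}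

def mkWalk (G : SimpleGraph V) : ∀ (a b : V) (l : List V),
    List.Chain G.Adj a l → l.getLastD a = b → G.Walk a b
  | _, _, [], _, rfl => SimpleGraph.Walk.nil
  | a, b, c :: l, h, hlast =>
      SimpleGraph.Walk.cons (List.chain_cons.mp h).1
        (mkWalk G c b l (List.chain_cons.mp h).2 (by rw [← hlast]; exact (List.getLastD_cons (a := a) (b := c) (l := l)).symm))

lemma mkWalk_support (G : SimpleGraph V) : ∀ (a b : V) (l : List V)
    (h : List.Chain G.Adj a l) (hl : l.getLastD a = b),
    (mkWalk G a b l h hl).support = a :: l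
  | _, _, [], _, rfl => rfl
  | a, b, c :: l, h, hlast => by
      rw [mkWalk, SimpleGraph.Walk.support_cons]; exact congrArg _ (mkWalk_support G c b l _ _)

/-- In an acyclic graph, a nodup adjacency chain is determined by its endpoints. -/
lemma chain_unique (hG : G.IsAcyclic) (a b : V) (l l' : List V)
    (h : List.Chain G.Adj a l) (h' : List.Chain G.Adj a l')
    (hl : l.getLastD a = b) (hl' : l'.getLastD a = b)
    (hnd : (a :: l).Nodup) (hnd' : (a :: l').Nodup) : l = l' := by
  let w := mkWalk G a b l h hl
  let w' := mkWalk G a b l' h' hl'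
  have hp : w.IsPath := by
    rw [SimpleGraph.Walk.isPath_def, mkWalk_support]; exact hnd
  have hp' : w'.IsPath := by
    rw [SimpleGraph.Walk.isPath_def, mkWalk_support]; exact hnd'
  have := SimpleGraph.isAcyclic_iff_path_unique.mp hG ⟨w, hp⟩ ⟨w', hp'⟩
  have hw : w = w' := congrArg Subtype.val this
  have hsup : w.support = w'.support := by rw [hw]
  rw [mkWalk_support, mkWalk_support] at hsup
  injection hsup

variable {V : Type*} {G : SimpleGraph V} {ord : V → ℕ} {l : List V}

lemma IsBidirected.reverse (h : IsBidirected G ord l) : IsBidirected G ord l.reverse := by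
  obtain ⟨hnd, l₁, l₂, m, rfl, hc1, hc2⟩ := h
  refine ⟨List.nodup_reverse.2 hnd, l₂.reverse, l₁.reverse, m, by simp, ?_, ?_⟩
  · have : (l₂.reverse ++ [m]) = (m :: l₂).reverse := by simp
    rw [this]; unfold List.Chain'; rw [List.isChain_reverse]
    exact hc2.imp (fun {a b} hab => ⟨hab.1.symm, hab.2⟩)
  · have : (m :: l₁.reverse) = (l₁ ++ [m]).reverse := by simp
    rw [this]; unfold List.Chain'; rw [List.isChain_reverse]
    exact hc1.imp (fun {a b} hab => ⟨hab.1.symm, hab.2⟩)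

lemma IsBidirected.chain'_adj (h : IsBidirected G ord l) : List.Chain' G.Adj l := by
  obtain ⟨hnd, l₁, l₂, m, rfl, hc1, hc2⟩ := h
  have h1 : List.Chain' G.Adj (l₁ ++ [m]) := hc1.imp (fun {a b} hab => hab.1)
  have h2 : List.Chain' G.Adj (m :: l₂) := hc2.imp (fun {a b} hab => hab.1)
  unfold List.Chain' at h1 ⊢
  rw [List.isChain_append] at h1
  rw [List.isChain_append]
  exact ⟨h1.1, h2, fun x hx y hy => by
    have := h1.2.2 x hx m (by simp)
    simp only [List.head?_cons, Option.mem_def, Option.some.injEq] at hy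
    rwa [← hy]⟩

lemma IsBidirected.uniF (h : IsBidirected G ord l) :
    UniF (fun j : Fin l.length => ord (l.get j)) := by
  obtain ⟨hnd, l₁, l₂, m, rfl, hc1, hc2⟩ := h
  have hmlt : l₁.length < (l₁ ++ m :: l₂).length := by simp
  refine ⟨⟨l₁.length, hmlt⟩, ?_, ?_⟩
  · haveI : IsTrans V (fun x y : V => ord x < ord y) := ⟨fun _ _ _ h1 h2 => h1.trans h2⟩
    have hp : List.Pairwise (fun x y => ord x < ord y) (l₁ ++ [m]) :=
      List.isChain_iff_pairwise.mp (hc1.imp (fun {a b} hab => hab.2))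
    rw [List.pairwise_iff_get] at hp
    intro a b hab hbm
    have hbl : (b : ℕ) ≤ l₁.length := hbm
    have h1 : (a : ℕ) < (l₁ ++ [m]).length := by simp; omega
    have h2 : (b : ℕ) < (l₁ ++ [m]).length := by simp; omega
    have he : l₁ ++ m :: l₂ = (l₁ ++ [m]) ++ l₂ := by simp
    have ha : (l₁ ++ m :: l₂).get a = (l₁ ++ [m]).get ⟨(a : ℕ), h1⟩ := by
      simp only [List.get_eq_getElem]
      rw [List.getElem_of_eq he a.isLt, List.getElem_append_left h1]
    have hb : (l₁ ++ m :: l₂).get b = (l₁ ++ [m]).get ⟨(b : ℕ), h2⟩ := by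
      simp only [List.get_eq_getElem]
      rw [List.getElem_of_eq he b.isLt, List.getElem_append_left h2]
    simp only [ha, hb]
    exact hp ⟨(a : ℕ), h1⟩ ⟨(b : ℕ), h2⟩ hab
  · haveI : IsTrans V (fun x y : V => ord y < ord x) := ⟨fun _ _ _ h1 h2 => h2.trans h1⟩
    have hp : List.Pairwise (fun x y => ord y < ord x) (m :: l₂) :=
      List.isChain_iff_pairwise.mp (hc2.imp (fun {a b} hab => hab.2))
    rw [List.pairwise_iff_get] at hp
    intro a b hma hab
    have hal : l₁.length ≤ (a : ℕ) := hma
    have hbign : (b : ℕ) < (l₁ ++ m :: l₂).length := b.isLt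
    have h1 : (a : ℕ) - l₁.length < (m :: l₂).length := by
      have := a.isLt; simp only [List.length_append, List.length_cons] at this ⊢; omega
    have h2 : (b : ℕ) - l₁.length < (m :: l₂).length := by
      have := b.isLt; simp only [List.length_append, List.length_cons] at this ⊢; omega
    have ha : (l₁ ++ m :: l₂).get a = (m :: l₂).get ⟨(a : ℕ) - l₁.length, h1⟩ := by
      simp only [List.get_eq_getElem]
      exact List.getElem_append_right hal
    have hb : (l₁ ++ m :: l₂).get b = (m :: l₂).get ⟨(b : ℕ) - l₁.length, h2⟩ := by
      simp only [List.get_eq_getElem]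
      exact List.getElem_append_right (le_trans hal (le_of_lt hab))
    simp only [ha, hb]
    exact hp _ _ (by simp only [Fin.mk_lt_mk]; omega)

lemma list_path_unique {V : Type*} {G : SimpleGraph V} (hG : G.IsAcyclic) {l l' : List V}
    (hc : List.Chain' G.Adj l) (hc' : List.Chain' G.Adj l')
    (hnd : l.Nodup) (hnd' : l'.Nodup) (hne : l ≠ []) (hne' : l' ≠ [])
    (hh : l.head? = l'.head?) (hl : l.getLast? = l'.getLast?) : l = l' := by
  cases l with
  | nil => exact absurd rfl hne
  | cons a t =>
  cases l' with
  | nil => exact absurd rfl hne'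
  | cons a' t' =>
  simp only [List.head?_cons, Option.some.injEq] at hh
  subst hh
  have hgl : t.getLastD a = t'.getLastD a := by
    have h1 := List.getLast?_eq_getLast (l := a :: t) (by simp)
    have h2 := List.getLast?_eq_getLast (l := a :: t') (by simp)
    rw [h1, h2] at hl
    have := Option.some.inj hl
    rw [List.getLast_eq_getLastD, List.getLast_eq_getLastD] at this
    exact this
  congr 1
  exact chain_unique hG a (t.getLastD a) t t'
    hc hc' rfl hgl.symm hnd hnd'


lemma card_filter_eq_aux {α : Type*} (p : α → Prop) (F1 F2 : Fintype α)
    (D1 D2 : DecidablePred p) :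
    (@Finset.filter _ p D1 (@Finset.univ _ F1)).card
      = (@Finset.filter _ p D2 (@Finset.univ _ F2)).card := by
  have h : F1 = F2 := Subsingleton.elim _ _
  subst h
  have h2 : D1 = D2 := by
    funext a
    exact Subsingleton.elim _ _
  subst h2
  rfl

/-- For a forest `T` on `n` vertices and `i ≥ 2`, the probability over a uniformly random
presentation order that the induced orientation contains a bidirected path with exactly
`2i − 2` vertices is at most `(n²/2) · 2^(2i−3)/(2i−2)!`. -/
theorem prob_exists_bidirected_path (n : ℕ) (T : SimpleGraph (Fin n)) (hT : T.IsAcyclic)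
    (i : ℕ) (hi : 2 ≤ i) :
    ffProb (fun ord => ∃ l : List (Fin n), l.length = 2 * i - 2 ∧ IsBidirected T ord l) ≤
      (n : ℝ) ^ 2 / 2 * 2 ^ (2 * i - 3) / (Nat.factorial (2 * i - 2) : ℝ) := by
  classical
  have hk0 : 0 < 2 * i - 2 := by omega
  let N := Fintype.card (Fin n)
  let Ep : Fin n × Fin n → Finset (Fin n ≃ Fin N) := fun p =>
    Finset.univ.filter (fun e => ∃ l : List (Fin n), l.length = 2 * i - 2 ∧
      IsBidirected T (fun v => (e v : ℕ)) l ∧ l.head? = some p.1 ∧ l.getLast? = some p.2)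
  let Pr : Finset (Fin n × Fin n) :=
    Finset.univ.filter (fun p : Fin n × Fin n => p.1 < p.2)
  let S : Finset (Fin n ≃ Fin N) := Finset.univ.filter
    (fun e => ∃ l : List (Fin n), l.length = 2 * i - 2 ∧ IsBidirected T (fun v => (e v : ℕ)) l)
  -- Step A : union bound decomposition
  have hsub : S ⊆ Pr.biUnion Ep := by
    intro e he
    rw [Finset.mem_filter] at he
    obtain ⟨-, l, hlen, hbid⟩ := he
    have hlne : l ≠ [] := by
      intro h; rw [h] at hlen; simp at hlen; omega
    have hlpos : 0 < l.length := List.length_pos_iff.2 hlne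
    have h2le : 2 ≤ l.length := by omega
    have hhead : l.head? = some (l.head hlne) := List.head?_eq_head hlne
    have hlast : l.getLast? = some (l.getLast hlne) := List.getLast?_eq_getLast hlne
    have hab : l.head hlne ≠ l.getLast hlne := by
      intro h
      have h1 : l.head hlne = l.get ⟨0, hlpos⟩ := by
        cases l with
        | nil => exact absurd rfl hlne
        | cons x t => rfl
      have h2 : l.getLast hlne = l.get ⟨l.length - 1, by omega⟩ := List.getLast_eq_getElem hlne
      have h3 := (List.nodup_iff_injective_get.mp hbid.1)
        (show l.get ⟨0, hlpos⟩ = l.get ⟨l.length - 1, by omega⟩ by rw [← h1, ← h2, h])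
      have h4 : (0 : ℕ) = l.length - 1 := by
        have := congrArg Fin.val h3; simpa using this
      omega
    rcases lt_or_gt_of_ne hab with hlt | hgt
    · refine Finset.mem_biUnion.2 ⟨(l.head hlne, l.getLast hlne), ?_, ?_⟩
      · simp only [Pr, Finset.mem_filter, Finset.mem_univ, true_and]; exact hlt
      · simp only [Ep, Finset.mem_filter, Finset.mem_univ, true_and]
        exact ⟨l, hlen, hbid, hhead, hlast⟩
    · refine Finset.mem_biUnion.2 ⟨(l.getLast hlne, l.head hlne), ?_, ?_⟩
      · simp only [Pr, Finset.mem_filter, Finset.mem_univ, true_and]; exact hgt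
      · simp only [Ep, Finset.mem_filter, Finset.mem_univ, true_and]
        exact ⟨l.reverse, by simpa using hlen, hbid.reverse,
          by rw [List.head?_reverse, hlast], by rw [List.getLast?_reverse, hhead]⟩
  -- Step B : per-pair bound
  have hpair : ∀ p : Fin n × Fin n,
      (Ep p).card * (2 * i - 2).factorial ≤ N.factorial * 2 ^ (2 * i - 2 - 1) := by
    intro p
    rcases Finset.eq_empty_or_nonempty (Ep p) with hemp | ⟨e₀, he₀⟩
    · rw [hemp]; simp
    · rw [Finset.mem_filter] at he₀
      obtain ⟨-, l₀, hlen₀, hbid₀, hh₀, hl₀⟩ := he₀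
      have hne₀ : l₀ ≠ [] := by intro h; rw [h] at hlen₀; simp at hlen₀; omega
      have hsub2 : Ep p ⊆ Finset.univ.filter
          (fun e : Fin n ≃ Fin N =>
            UniF (fun j : Fin l₀.length => ((e (l₀.get j) : Fin N) : ℕ))) := by
        intro e he
        rw [Finset.mem_filter] at he
        obtain ⟨-, l, hlen, hbid, hh, hl⟩ := he
        have hll : l = l₀ := list_path_unique hT hbid.chain'_adj hbid₀.chain'_adj
          hbid.1 hbid₀.1 (by intro h; rw [h] at hlen; simp at hlen; omega) hne₀
          (by rw [hh, hh₀]) (by rw [hl, hl₀])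
        subst hll
        simp only [Finset.mem_filter, Finset.mem_univ, true_and]
        exact hbid.uniF
      have hinj : Function.Injective (fun j : Fin l₀.length => l₀.get j) :=
        List.nodup_iff_injective_get.mp hbid₀.1
      have hpos₀ : 0 < l₀.length := by omega
      have hcount := count_uni (V := Fin n) (fun j : Fin l₀.length => l₀.get j) hinj hpos₀
      rw [show 2 * i - 2 = l₀.length from hlen₀.symm]
      calc (Ep p).card * l₀.length.factorial
          ≤ (Finset.univ.filter (fun e : Fin n ≃ Fin N =>
              UniF (fun j : Fin l₀.length => ((e (l₀.get j) : Fin N) : ℕ)))).card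
              * l₀.length.factorial := Nat.mul_le_mul_right _ (Finset.card_le_card hsub2)
        _ ≤ N.factorial * 2 ^ (l₀.length - 1) := hcount
  -- Step C : number of pairs
  have hPr2 : 2 * Pr.card ≤ n ^ 2 := by
    have hswap : Pr.card =
        (Finset.univ.filter (fun p : Fin n × Fin n => p.2 < p.1)).card := by
      apply Finset.card_bij (fun p _ => (p.2, p.1))
      · intro p hp
        simp only [Pr, Finset.mem_filter, Finset.mem_univ, true_and] at hp ⊢
        exact hp
      · intro p hp q hq h
        have h1 := congrArg Prod.fst h
        have h2 := congrArg Prod.snd h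
        simp only at h1 h2
        exact Prod.ext h2 h1
      · intro q hq
        simp only [Finset.mem_filter, Finset.mem_univ, true_and] at hq
        exact ⟨(q.2, q.1), by
          simp only [Pr, Finset.mem_filter, Finset.mem_univ, true_and]; exact hq, rfl⟩
    have hdisj : Disjoint Pr (Finset.univ.filter (fun p : Fin n × Fin n => p.2 < p.1)) := by
      rw [Finset.disjoint_left]
      intro p hp hq
      simp only [Pr, Finset.mem_filter, Finset.mem_univ, true_and] at hp hq
      exact absurd hq (not_lt.2 hp.le)
    have hunion :=
      Finset.card_union_of_disjoint hdisj
    have hle : Pr.card + (Finset.univ.filter (fun p : Fin n × Fin n => p.2 < p.1)).card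
        ≤ n * n := by
      rw [← hunion]
      calc _ ≤ Fintype.card (Fin n × Fin n) := Finset.card_le_univ _
        _ = n * n := by simp
    have hnn : n ^ 2 = n * n := by ring
    omega
  -- Combine in ℕ
  have hfinal : S.card * (2 * (2 * i - 2).factorial)
      ≤ n ^ 2 * 2 ^ (2 * i - 3) * N.factorial := by
    have h1 : S.card ≤ ∑ p ∈ Pr, (Ep p).card :=
      le_trans (Finset.card_le_card hsub) Finset.card_biUnion_le
    have h2 : S.card * (2 * i - 2).factorial
        ≤ Pr.card * (N.factorial * 2 ^ (2 * i - 2 - 1)) := by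
      calc S.card * (2 * i - 2).factorial
          ≤ (∑ p ∈ Pr, (Ep p).card) * (2 * i - 2).factorial := Nat.mul_le_mul_right _ h1
        _ = ∑ p ∈ Pr, (Ep p).card * (2 * i - 2).factorial := by rw [Finset.sum_mul]
        _ ≤ ∑ p ∈ Pr, N.factorial * 2 ^ (2 * i - 2 - 1) :=
            Finset.sum_le_sum (fun p _ => hpair p)
        _ = Pr.card * (N.factorial * 2 ^ (2 * i - 2 - 1)) := by
            rw [Finset.sum_const, smul_eq_mul]
    have h3 : 2 * i - 2 - 1 = 2 * i - 3 := by omega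
    rw [h3] at h2
    calc S.card * (2 * (2 * i - 2).factorial)
        = 2 * (S.card * (2 * i - 2).factorial) := by ring
      _ ≤ 2 * (Pr.card * (N.factorial * 2 ^ (2 * i - 3))) := Nat.mul_le_mul_left _ h2
      _ = (2 * Pr.card) * (N.factorial * 2 ^ (2 * i - 3)) := by ring
      _ ≤ n ^ 2 * (N.factorial * 2 ^ (2 * i - 3)) := Nat.mul_le_mul_right _ hPr2
      _ = n ^ 2 * 2 ^ (2 * i - 3) * N.factorial := by ring
  -- Transfer to ℝ
  simp only [ffProb]
  have hkey : ∀ (F : Fintype (Fin n ≃ Fin (Fintype.card (Fin n))))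
      (D : DecidablePred (fun e : Fin n ≃ Fin (Fintype.card (Fin n)) =>
        ∃ l : List (Fin n), l.length = 2 * i - 2 ∧ IsBidirected T (fun v => ((e v) : ℕ)) l)),
      (@Finset.filter _ _ D (@Finset.univ _ F)).card = S.card := by
    intro F D
    exact card_filter_eq_aux _ F _ D _
  rw [hkey]
  have hNpos : (0 : ℝ) < ((Fintype.card (Fin n)).factorial : ℝ) := by
    exact_mod_cast Nat.factorial_pos _
  rw [div_le_iff₀ hNpos]
  have hRHS : (n : ℝ) ^ 2 / 2 * 2 ^ (2 * i - 3) / ((2 * i - 2).factorial : ℝ)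
        * ((Fintype.card (Fin n)).factorial : ℝ)
      = ((n : ℝ) ^ 2 * 2 ^ (2 * i - 3) * ((Fintype.card (Fin n)).factorial : ℝ))
        / (2 * ((2 * i - 2).factorial : ℝ)) := by
    field_simp
  rw [hRHS, le_div_iff₀ (by positivity)]
  have hcast : ((S.card * (2 * (2 * i - 2).factorial) : ℕ) : ℝ)
      ≤ ((n ^ 2 * 2 ^ (2 * i - 3) * N.factorial : ℕ) : ℝ) := Nat.cast_le.mpr hfinal
  push_cast at hcast
  exact hcast
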